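/- Risk-controlling configuration selection (Theorem 1): let (Ω, F, P) be a probability space, δ ∈ (0,1), and let λ_1, …, λ_T be a fixed ordered list of configurations from a set Λ. Let ℓ_1, …, ℓ_c : Λ → ℝ be loss functionals and α_1, …, α_c ∈ ℝ user-specified bounds; say the null hypothesis H_{λ_j} holds if ℓ_i(λ_j) > α_i for some i ∈ {1,…,c}. Let p_1, …, p_T : Ω → [0,1] be measurable random variables such that p_j is super-uniform whenever H_{λ_j} holds. Define the rejection set R(ω) = { j : p_{j'}(ω) < δ for all j' ≤ j }, and let λ*(ω) be any measurable selection of an element of {λ_j : j ∈ R(ω)} on the event R(ω) ≠ ∅ (and λ* = null otherwise). Then P( R ≠ ∅ and ∃ i ∈ {1,…,c}, ℓ_i(λ*) > α_i ) ≤ δ; equivalently, the selected configuration satisfies P(ℓ_i(λ*) ≤ α_i for all i) ≥ 1 − δ whenever a configuration is returned. -/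
import Mathlib


open MeasureTheory ProbabilityTheory

/-- **Risk-controlling configuration selection (Theorem 1).**
Configurations `lam 0, …, lam (T-1)` from `Λ` are tested in a fixed order via
p-values `p j` which are super-uniform whenever the null hypothesis
`∃ i, ℓ i (lam j) > α i` holds.  The rejection set is
`R(ω) = { j | ∀ j' ≤ j, p j' ω < δ }`, and `sel ω` is a selection of an element
of `{ lam j | j ∈ R(ω) }` whenever `R(ω)` is nonempty.  Then the probability
that some configuration is returned and the selected configuration violates a
constraint is at most `δ`. -/
theorem risk_controlling_configuration_selection
    {Ω : Type*} [MeasureSpace Ω] [IsProbabilityMeasure (ℙ : Measure Ω)]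
    {Λ : Type*}
    (δ : ℝ) (hδ : δ ∈ Set.Ioo (0 : ℝ) 1)
    (T : ℕ) (hT : 0 < T) (lam : Fin T → Λ)
    (c : ℕ) (ℓ : Fin c → Λ → ℝ) (α : Fin c → ℝ)
    (p : Fin T → Ω → ℝ)
    (hmeas : ∀ j, Measurable (p j))
    (hrange : ∀ j ω, p j ω ∈ Set.Icc (0 : ℝ) 1)
    (hsuper : ∀ j : Fin T, (∃ i, α i < ℓ i (lam j)) →
      ∀ u ∈ Set.Icc (0 : ℝ) 1, ℙ {ω | p j ω ≤ u} ≤ ENNReal.ofReal u)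
    (sel : Ω → Λ)
    (hsel : ∀ ω, (∃ j : Fin T, ∀ j' ≤ j, p j' ω < δ) →
      ∃ j : Fin T, (∀ j' ≤ j, p j' ω < δ) ∧ sel ω = lam j) :
    ℙ {ω | (∃ j : Fin T, ∀ j' ≤ j, p j' ω < δ) ∧ ∃ i, α i < ℓ i (sel ω)}
      ≤ ENNReal.ofReal δ := by
  classical
  by_cases hnull : ∃ j : Fin T, ∃ i, α i < ℓ i (lam j)
  · obtain ⟨j₀, hj₀, hmin⟩ := Finset.exists_min_image
      (Finset.univ.filter (fun j : Fin T => ∃ i, α i < ℓ i (lam j))) id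
      (by obtain ⟨j, hj⟩ := hnull
          exact ⟨j, Finset.mem_filter.2 ⟨Finset.mem_univ _, hj⟩⟩)
    have hsub : {ω | (∃ j : Fin T, ∀ j' ≤ j, p j' ω < δ) ∧ ∃ i, α i < ℓ i (sel ω)}
        ⊆ {ω | p j₀ ω ≤ δ} := by
      rintro ω ⟨hR, hi⟩
      obtain ⟨j, hjlt, hseleq⟩ := hsel ω hR
      rw [hseleq] at hi
      have hle : j₀ ≤ j := hmin j (Finset.mem_filter.2 ⟨Finset.mem_univ _, hi⟩)
      exact (hjlt j₀ hle).le
    exact le_trans (measure_mono hsub)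
      (hsuper j₀ (Finset.mem_filter.1 hj₀).2 δ ⟨hδ.1.le, hδ.2.le⟩)
  · have hempty : {ω | (∃ j : Fin T, ∀ j' ≤ j, p j' ω < δ) ∧ ∃ i, α i < ℓ i (sel ω)}
        = ∅ := by
      ext ω
      simp only [Set.mem_setOf_eq, Set.mem_empty_iff_false, iff_false, not_and]
      rintro hR hi
      obtain ⟨j, _, hseleq⟩ := hsel ω hR
      exact hnull ⟨j, hseleq ▸ hi⟩
    rw [hempty]
    simp
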